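/- Let Q_M(a) = a₀² − a₁² − a₂² − a₃² and B_M(u, v) = u₀v₀ − u₁v₁ − u₂v₂ − u₃v₃ be the Minkowski quadratic and bilinear forms on ℝ⁴, let γ₀ be the first standard basis vector, and for x ∈ ℝ⁴ with zeroth coordinate zero and Euclidean norm ‖x‖ < 1 let h(x) := ((1 + ‖x‖²)·γ₀ + 2x)/(1 − ‖x‖²). For such x_a, x_b, set m_a := x_a + γ₀ and m_b := x_b + γ₀. Then (1/2)(1 + B_M(h(x_a), h(x_b))) = 1 − Q_M(m_a − m_b)/(Q_M(m_a)·Q_M(m_b)), and this common value is ≥ 1. -/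
import Mathlib


/-- The Minkowski quadratic form on `Fin 4 → ℝ`. -/
def QM (a : Fin 4 → ℝ) : ℝ := a 0 ^ 2 - a 1 ^ 2 - a 2 ^ 2 - a 3 ^ 2

/-- The Minkowski bilinear form on `Fin 4 → ℝ`. -/
def BM (u v : Fin 4 → ℝ) : ℝ := u 0 * v 0 - u 1 * v 1 - u 2 * v 2 - u 3 * v 3

/-- For `x_a, x_b ∈ ℝ⁴` with zeroth coordinate zero and Euclidean norm `< 1`, with
`h x = ((1 + ‖x‖²) γ₀ + 2x)/(1 − ‖x‖²)` and `m_a = x_a + γ₀`, `m_b = x_b + γ₀`, one has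
`(1/2)(1 + B_M(h x_a, h x_b)) = 1 − Q_M(m_a − m_b)/(Q_M(m_a) Q_M(m_b))`, and this common
value is `≥ 1`. -/
theorem hyperbolic_transition_formula
    (γ₀ : Fin 4 → ℝ) (hγ₀ : γ₀ = Pi.single 0 1)
    (h : (Fin 4 → ℝ) → (Fin 4 → ℝ))
    (hh : ∀ x, h x = (1 - ∑ i, x i ^ 2)⁻¹ • ((1 + ∑ i, x i ^ 2) • γ₀ + (2 : ℝ) • x))
    (xa xb : Fin 4 → ℝ)
    (hxa0 : xa 0 = 0) (hxa1 : Real.sqrt (∑ i, xa i ^ 2) < 1)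
    (hxb0 : xb 0 = 0) (hxb1 : Real.sqrt (∑ i, xb i ^ 2) < 1) :
    (1 / 2) * (1 + BM (h xa) (h xb)) =
        1 - QM ((xa + γ₀) - (xb + γ₀)) / (QM (xa + γ₀) * QM (xb + γ₀)) ∧
      1 ≤ (1 / 2) * (1 + BM (h xa) (h xb)) := by
  subst hγ₀
  have hsum : ∀ x : Fin 4 → ℝ, (∑ i, x i ^ 2) = x 0 ^ 2 + x 1 ^ 2 + x 2 ^ 2 + x 3 ^ 2 := by
    intro x; simp [Fin.sum_univ_four]
  have hA : (∑ i, xa i ^ 2) = xa 1 ^ 2 + xa 2 ^ 2 + xa 3 ^ 2 := by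
    rw [hsum, hxa0]; ring
  have hB : (∑ i, xb i ^ 2) = xb 1 ^ 2 + xb 2 ^ 2 + xb 3 ^ 2 := by
    rw [hsum, hxb0]; ring
  have hAnn : (0:ℝ) ≤ xa 1 ^ 2 + xa 2 ^ 2 + xa 3 ^ 2 := by positivity
  have hBnn : (0:ℝ) ≤ xb 1 ^ 2 + xb 2 ^ 2 + xb 3 ^ 2 := by positivity
  have hA1 : xa 1 ^ 2 + xa 2 ^ 2 + xa 3 ^ 2 < 1 := by
    rw [hA] at hxa1
    nlinarith [Real.sq_sqrt hAnn, Real.sqrt_nonneg (xa 1 ^ 2 + xa 2 ^ 2 + xa 3 ^ 2)]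
  have hB1 : xb 1 ^ 2 + xb 2 ^ 2 + xb 3 ^ 2 < 1 := by
    rw [hB] at hxb1
    nlinarith [Real.sq_sqrt hBnn, Real.sqrt_nonneg (xb 1 ^ 2 + xb 2 ^ 2 + xb 3 ^ 2)]
  have ha0 : (1:ℝ) - (xa 1 ^ 2 + xa 2 ^ 2 + xa 3 ^ 2) ≠ 0 := by linarith
  have hb0 : (1:ℝ) - (xb 1 ^ 2 + xb 2 ^ 2 + xb 3 ^ 2) ≠ 0 := by linarith
  have hBM : BM (h xa) (h xb) =
      ((1 + (xa 1 ^ 2 + xa 2 ^ 2 + xa 3 ^ 2)) * (1 + (xb 1 ^ 2 + xb 2 ^ 2 + xb 3 ^ 2))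
        - 4 * (xa 1 * xb 1 + xa 2 * xb 2 + xa 3 * xb 3)) /
      ((1 - (xa 1 ^ 2 + xa 2 ^ 2 + xa 3 ^ 2)) * (1 - (xb 1 ^ 2 + xb 2 ^ 2 + xb 3 ^ 2))) := by
    rw [hh, hh, hA, hB]
    simp only [BM, Pi.smul_apply, Pi.add_apply, Pi.single_apply, smul_eq_mul]
    norm_num [hxa0, hxb0, show ((1:Fin 4) = 0) = False from by decide,
      show ((2:Fin 4) = 0) = False from by decide, show ((3:Fin 4) = 0) = False from by decide]
    field_simp
    ring
  constructor
  · have hQa : QM (xa + Pi.single 0 1) = 1 - (xa 1 ^ 2 + xa 2 ^ 2 + xa 3 ^ 2) := by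
      simp only [QM, Pi.add_apply, Pi.single_apply]
      norm_num [hxa0, show ((1:Fin 4) = 0) = False from by decide,
        show ((2:Fin 4) = 0) = False from by decide, show ((3:Fin 4) = 0) = False from by decide]
      ring
    have hQb : QM (xb + Pi.single 0 1) = 1 - (xb 1 ^ 2 + xb 2 ^ 2 + xb 3 ^ 2) := by
      simp only [QM, Pi.add_apply, Pi.single_apply]
      norm_num [hxb0, show ((1:Fin 4) = 0) = False from by decide,
        show ((2:Fin 4) = 0) = False from by decide, show ((3:Fin 4) = 0) = False from by decide]
      ring
    have hQab : QM (xa + Pi.single 0 1 - (xb + Pi.single 0 1)) =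
        -((xa 1 - xb 1) ^ 2 + (xa 2 - xb 2) ^ 2 + (xa 3 - xb 3) ^ 2) := by
      simp only [QM, Pi.add_apply, Pi.sub_apply, Pi.single_apply]
      norm_num [hxa0, hxb0, show ((1:Fin 4) = 0) = False from by decide,
        show ((2:Fin 4) = 0) = False from by decide, show ((3:Fin 4) = 0) = False from by decide]
      ring
    rw [hBM, hQa, hQb, hQab]
    field_simp
    ring
  · rw [hBM]
    have hd : (0:ℝ) < (1 - (xa 1 ^ 2 + xa 2 ^ 2 + xa 3 ^ 2)) * (1 - (xb 1 ^ 2 + xb 2 ^ 2 + xb 3 ^ 2)) := by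
      nlinarith
    have hND : (1 - (xa 1 ^ 2 + xa 2 ^ 2 + xa 3 ^ 2)) * (1 - (xb 1 ^ 2 + xb 2 ^ 2 + xb 3 ^ 2)) ≤
        (1 + (xa 1 ^ 2 + xa 2 ^ 2 + xa 3 ^ 2)) * (1 + (xb 1 ^ 2 + xb 2 ^ 2 + xb 3 ^ 2))
          - 4 * (xa 1 * xb 1 + xa 2 * xb 2 + xa 3 * xb 3) := by
      nlinarith [sq_nonneg (xa 1 - xb 1), sq_nonneg (xa 2 - xb 2), sq_nonneg (xa 3 - xb 3)]
    have := (one_le_div hd).mpr hND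
    linarith
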